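/- arXiv:1912.06795 — 2 statements merged into one kernel-verified Lean document; each statement's English description precedes it below -/
import Mathlib

section
/- For γ > 0 and r > 0, the function b(r) = Σ_{j=0}^∞ 2^{-jγ} r/(r + 2^j) satisfies b(r)/r − (1/2) b'(r) ≥ c (1 + r)^{-1-γ} for some constant c > 0 depending only on γ. -/
/-!
Termwise, the summand `2^{-jγ} r/(r + 2^j)` of `b` contributes
`2^{-jγ}/(r + 2^j) - 2^{-jγ} 2^{j-1}/(r + 2^j)^2 ≥ 2^{-jγ}/(2(r + 2^j)) ≥ 0` to `b(r)/r - b'(r)/2`,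
so the whole series is at least its single term with `1 + r ≤ 2^j ≤ 2(1 + r)`, which is
`≥ 2^{-γ}(1 + r)^{-γ} / (6(1 + r))`.
-/

open Real

lemma two_rpow_neg_natCast_mul (γ : ℝ) (j : ℕ) :
    (2 : ℝ) ^ (-(j : ℝ) * γ) = ((2 : ℝ) ^ j) ^ (-γ) := by
  rw [← rpow_natCast, ← rpow_mul zero_le_two, neg_mul_comm]

lemma summable_two_rpow_neg_natCast_mul {γ : ℝ} (hγ : 0 < γ) {g : ℕ → ℝ}
    (hg₀ : ∀ j, 0 ≤ g j) (hg₁ : ∀ j, g j ≤ 1) :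
    Summable fun j : ℕ => (2 : ℝ) ^ (-(j : ℝ) * γ) * g j := by
  have hratio : (2 : ℝ) ^ (-γ) < 1 := rpow_lt_one_of_one_lt_of_neg one_lt_two (neg_neg_of_pos hγ)
  refine (summable_geometric_of_lt_one (by positivity) hratio).of_nonneg_of_le
    (fun j => mul_nonneg (by positivity) (hg₀ j)) fun j => ?_
  calc (2 : ℝ) ^ (-(j : ℝ) * γ) * g j ≤ (2 : ℝ) ^ (-(j : ℝ) * γ) :=
        mul_le_of_le_one_right (by positivity) (hg₁ j)
    _ = ((2 : ℝ) ^ (-γ)) ^ j := by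
        rw [two_rpow_neg_natCast_mul, ← rpow_natCast, ← rpow_natCast, ← rpow_mul zero_le_two,
          ← rpow_mul zero_le_two, mul_comm]

lemma div_two_mul_add_le_div_sub_half_mul {a r x : ℝ} (ha : 0 ≤ a) (hr : 0 < r) (hx : 0 ≤ x) :
    a / (2 * (r + x)) ≤ a * (r / (r + x)) / r - 1 / 2 * (a * (x / (r + x) ^ 2)) := by
  have hrx : 0 < r + x := by positivity
  have hfirst : a * (r / (r + x)) / r = a / (r + x) := by field_simp
  have hsecond : a * (x / (r + x) ^ 2) ≤ a / (r + x) := by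
    rw [mul_div_assoc', div_le_div_iff₀ (by positivity) hrx, pow_two, ← mul_assoc]
    exact mul_le_mul_of_nonneg_right (mul_le_mul_of_nonneg_left (by linarith) ha) hrx.le
  rw [hfirst, mul_comm 2, ← div_div]
  linarith

lemma two_rpow_neg_div_six_mul_le {γ r x : ℝ} (hγ : 0 ≤ γ) (hr : 0 ≤ r) (hx : 0 < x)
    (hx₂ : x ≤ 2 * (1 + r)) :
    (2 : ℝ) ^ (-γ) / 6 * (1 + r) ^ (-(1 + γ)) ≤ x ^ (-γ) / (2 * (r + x)) := by
  have hr₁ : 0 < 1 + r := by linarith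
  have hnum : (2 : ℝ) ^ (-γ) * (1 + r) ^ (-γ) ≤ x ^ (-γ) := by
    rw [← mul_rpow zero_le_two hr₁.le]
    exact rpow_le_rpow_of_nonpos hx hx₂ (neg_nonpos.mpr hγ)
  have hsplit : (1 + r) ^ (-(1 + γ)) = (1 + r) ^ (-γ) / (1 + r) := by
    rw [show -(1 + γ) = -γ + -1 by ring, rpow_add hr₁, rpow_neg_one, div_eq_mul_inv]
  calc (2 : ℝ) ^ (-γ) / 6 * (1 + r) ^ (-(1 + γ))
      = (2 : ℝ) ^ (-γ) * (1 + r) ^ (-γ) / (2 * (3 * (1 + r))) := by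
        rw [hsplit, div_mul_div_comm, ← mul_assoc]; norm_num
    _ ≤ x ^ (-γ) / (2 * (r + x)) := by
        gcongr
        linarith

/-- For `γ > 0` and `r > 0`, with `b(r) = ∑_{j=0}^∞ 2^{-jγ} r/(r + 2^j)` and
`b'(r) = ∑_{j=0}^∞ 2^{-jγ} 2^j/(r + 2^j)^2`, one has
`b(r)/r − (1/2) b'(r) ≥ c (1 + r)^{-1-γ}` for some `c > 0` depending only on `γ`. -/
theorem stmt_2 (γ : ℝ) (hγ : 0 < γ) :
    ∃ c : ℝ, 0 < c ∧ ∀ r : ℝ, 0 < r →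
      c * (1 + r) ^ (-(1 + γ)) ≤
        (∑' j : ℕ, (2 : ℝ) ^ (-(j : ℝ) * γ) * (r / (r + 2 ^ j))) / r
          - (1 / 2) * ∑' j : ℕ, (2 : ℝ) ^ (-(j : ℝ) * γ) * (2 ^ j / (r + 2 ^ j) ^ 2) := by
  refine ⟨(2 : ℝ) ^ (-γ) / 6, by positivity, fun r hr => ?_⟩
  have hpow (j : ℕ) : (1 : ℝ) ≤ 2 ^ j := one_le_pow₀ one_le_two
  have hb := summable_two_rpow_neg_natCast_mul hγ (g := fun j => r / (r + 2 ^ j))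
    (fun j => by positivity) fun j => div_le_one_of_le₀ (by linarith [hpow j]) (by positivity)
  have hb' := summable_two_rpow_neg_natCast_mul hγ (g := fun j => (2 : ℝ) ^ j / (r + 2 ^ j) ^ 2)
    (fun j => by positivity) fun j => div_le_one_of_le₀ (by nlinarith [hpow j]) (by positivity)
  have hterm (j : ℕ) := div_two_mul_add_le_div_sub_half_mul (a := (2 : ℝ) ^ (-(j : ℝ) * γ))
    (x := (2 : ℝ) ^ j) (by positivity) hr (by positivity)
  obtain ⟨n, hn, -⟩ := exists_nat_pow_near (by linarith : (1 : ℝ) ≤ 1 + r) one_lt_two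
  calc (2 : ℝ) ^ (-γ) / 6 * (1 + r) ^ (-(1 + γ))
      ≤ (2 : ℝ) ^ (-((n + 1 : ℕ) : ℝ) * γ) / (2 * (r + 2 ^ (n + 1))) := by
        rw [two_rpow_neg_natCast_mul]
        exact two_rpow_neg_div_six_mul_le hγ.le hr.le (by positivity) (by rw [pow_succ']; linarith)
    _ ≤ ∑' j : ℕ, ((2 : ℝ) ^ (-(j : ℝ) * γ) * (r / (r + 2 ^ j)) / r
          - 1 / 2 * ((2 : ℝ) ^ (-(j : ℝ) * γ) * (2 ^ j / (r + 2 ^ j) ^ 2))) :=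
        (hterm (n + 1)).trans <| ((hb.div_const r).sub (hb'.mul_left _)).le_tsum _
          fun j _ => (div_nonneg (by positivity) (by positivity)).trans (hterm j)
    _ = _ := by rw [(hb.div_const r).tsum_sub (hb'.mul_left _), tsum_div_const, tsum_mul_left]
end

section
/- Let γ > 0 and a(r) = Σ_{j=0}^∞ 2^{-jγ}/(r + 2^j) on (0,∞). Then for r > 0, the radial Laplacian of a, Δa(r) = a''(r) + (2/r) a'(r), satisfies −Δa(r) ≥ c (1+r)^{-3-γ} for some c > 0 depending on γ. -/
set_option maxHeartbeats 1000000

/-- For `γ > 0` and `r > 0`, with `a_j(r) = 2^{-jγ}/(r + 2^j)`, each term of the radial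
Laplacian `Δa_j = a_j'' + (2/r)a_j'` satisfies the algebraic identity
`2·2^{-jγ}/(r+2^j)³ − 2·2^{-jγ}/(r(r+2^j)²) = −2·2^{-jγ}·2^j/(r(r+2^j)³)`, and the
resulting series `−Δa(r) = ∑_j 2·2^{-jγ} 2^j/(r(r+2^j)³)` satisfies
`−Δa(r) ≥ c (1+r)^{-3-γ}` for some `c > 0` depending only on `γ`. -/
theorem stmt_4 (γ : ℝ) (hγ : 0 < γ) :
    ∃ c : ℝ, 0 < c ∧ ∀ r : ℝ, 0 < r →
      (∀ j : ℕ,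
        2 * (2 : ℝ) ^ (-(j : ℝ) * γ) / (r + 2 ^ j) ^ 3
            - 2 * (2 : ℝ) ^ (-(j : ℝ) * γ) / (r * (r + 2 ^ j) ^ 2)
          = -(2 * (2 : ℝ) ^ (-(j : ℝ) * γ) * 2 ^ j / (r * (r + 2 ^ j) ^ 3))) ∧
      c * (1 + r) ^ (-(3 + γ)) ≤
        ∑' j : ℕ, 2 * (2 : ℝ) ^ (-(j : ℝ) * γ) * 2 ^ j / (r * (r + 2 ^ j) ^ 3) := by
  refine ⟨1/8, by norm_num, fun r hr => ?_⟩
  have hx : (0:ℝ) < 1 + r := by linarith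
  have hx1 : (1:ℝ) ≤ 1 + r := by linarith
  constructor
  · intro j
    have h1 : (0:ℝ) < r + 2 ^ j := by positivity
    field_simp
    ring
  · set f : ℕ → ℝ := fun j => 2 * (2:ℝ) ^ (-(j:ℝ)*γ) * 2 ^ j / (r * (r + 2 ^ j) ^ 3) with hf
    have hnonneg : ∀ j, 0 ≤ f j := fun j => by positivity
    have key : ∀ j : ℕ, (2:ℝ) ^ (-(j:ℝ)*γ) = ((2:ℝ) ^ j) ^ (-γ) := by
      intro j
      rw [← Real.rpow_natCast 2 j, ← Real.rpow_mul (by norm_num)]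
      ring_nf
    -- Summability
    have hg : Summable (fun j : ℕ => (2/r) * ((2:ℝ) ^ (-(γ+2))) ^ j) := by
      refine Summable.mul_left _ (summable_geometric_of_lt_one (by positivity) ?_)
      rw [← Real.rpow_zero 2]
      exact Real.rpow_lt_rpow_of_exponent_lt one_lt_two (by linarith)
    have hle : ∀ j : ℕ, f j ≤ (2/r) * ((2:ℝ) ^ (-(γ+2))) ^ j := by
      intro j
      have h2j : (0:ℝ) < 2 ^ j := by positivity
      have hX : ((2:ℝ) ^ j) ^ 3 ≤ (r + 2 ^ j) ^ 3 :=
        pow_le_pow_left₀ h2j.le (by linarith) 3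
      have step1 : f j ≤ 2 * (2:ℝ) ^ (-(j:ℝ)*γ) * 2 ^ j / (r * ((2:ℝ) ^ j) ^ 3) :=
        div_le_div_of_nonneg_left (by positivity) (by positivity)
          (mul_le_mul_of_nonneg_left hX hr.le)
      refine step1.trans_eq ?_
      have e : ((2:ℝ) ^ (-(γ+2))) ^ j
          = (2:ℝ) ^ (-(j:ℝ)*γ) * (2:ℝ) ^ (j:ℝ) / (2:ℝ) ^ ((j:ℝ)*3) := by
        rw [← Real.rpow_natCast ((2:ℝ) ^ (-(γ+2))) j, ← Real.rpow_mul (by norm_num),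
          ← Real.rpow_add two_pos, ← Real.rpow_sub two_pos]
        ring_nf
      have h2jr : (2:ℝ) ^ (j:ℝ) = (2:ℝ) ^ j := Real.rpow_natCast 2 j
      have h3 : (2:ℝ) ^ ((j:ℝ)*3) = ((2:ℝ) ^ j) ^ 3 := by
        rw [← h2jr, ← Real.rpow_natCast ((2:ℝ) ^ ((j:ℝ))) 3, ← Real.rpow_mul (by norm_num)]
        norm_num
      rw [e, h2jr, h3]
      have hC : ((2:ℝ) ^ j) ^ 3 ≠ 0 := by positivity
      field_simp
    have hsum : Summable f := Summable.of_nonneg_of_le hnonneg hle hg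
    -- choice of j0 with 2^j0 ≤ 1+r < 2·2^j0
    obtain ⟨j0, hj0le, hj0gt⟩ : ∃ j0 : ℕ, (2:ℝ) ^ j0 ≤ 1 + r ∧ 1 + r < 2 * 2 ^ j0 := by
      set n := Int.log 2 (1+r) with hn
      have hn0 : 0 ≤ n := by
        rw [hn, Int.log_of_one_le_right 2 hx1]; exact Int.natCast_nonneg _
      have hpow : ((2:ℝ) ^ n.toNat : ℝ) = (2:ℝ) ^ n := by
        rw [← zpow_natCast, Int.toNat_of_nonneg hn0]
      have h1 := Int.zpow_log_le_self (R := ℝ) (b := 2) one_lt_two hx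
      have h2 := Int.lt_zpow_succ_log_self (R := ℝ) (b := 2) one_lt_two (1+r)
      push_cast at h1 h2
      refine ⟨n.toNat, ?_, ?_⟩
      · rw [hpow]; exact h1
      · rw [hpow]
        calc 1 + r < (2:ℝ) ^ (n+1) := h2
          _ = 2 * 2 ^ n := by rw [zpow_add_one₀ (by norm_num : (2:ℝ) ≠ 0)]; ring
    have h2j0 : (0:ℝ) < 2 ^ j0 := by positivity
    -- lower bound on the chosen term
    have hterm : 1/8 * (1+r) ^ (-(3+γ)) ≤ f j0 := by
      have hnum : (1+r) ^ (-γ) * (1+r) ≤ 2 * (2:ℝ) ^ (-(j0:ℝ)*γ) * 2 ^ j0 := by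
        rw [key j0]
        have e1 : (1+r) ^ (-γ) ≤ ((2:ℝ) ^ j0) ^ (-γ) :=
          Real.rpow_le_rpow_of_nonpos h2j0 hj0le (by linarith)
        calc (1+r) ^ (-γ) * (1+r) ≤ ((2:ℝ) ^ j0) ^ (-γ) * (2 * 2 ^ j0) :=
              mul_le_mul e1 hj0gt.le hx.le (by positivity)
          _ = 2 * ((2:ℝ) ^ j0) ^ (-γ) * 2 ^ j0 := by ring
      have hden : r * (r + 2 ^ j0) ^ 3 ≤ 8 * (1+r) ^ 4 := by
        have h1 : r + 2 ^ j0 ≤ 2 * (1+r) := by nlinarith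
        have h3 : (r + 2 ^ j0) ^ 3 ≤ (2 * (1+r)) ^ 3 :=
          pow_le_pow_left₀ (by positivity) h1 3
        nlinarith [pow_pos hx 3, pow_pos hx 4]
      have hstep : (1+r) ^ (-γ) * (1+r) / (8 * (1+r) ^ 4) ≤ f j0 :=
        div_le_div₀ (by positivity) hnum (by positivity) hden
      refine le_trans (le_of_eq ?_) hstep
      rw [show (-(3+γ)) = -γ + 1 - (4:ℝ) by ring, Real.rpow_sub hx,
        Real.rpow_add hx, Real.rpow_one,
        show ((4:ℝ)) = ((4:ℕ):ℝ) by norm_num, Real.rpow_natCast]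
      field_simp
    exact hterm.trans (Summable.le_tsum hsum j0 (fun i _ => hnonneg i))
end
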